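/- For μ ∈ ℝ, σ > 0, c > 0, let g(μ, σ, c) denote the unique real solution of (μ − g)·Φ((μ − g)/σ) + σ·φ((μ − g)/σ) = c (the Gittins index of a Gaussian Pandora's box with mean μ, standard deviation σ, and opening cost c). Then g is differentiable on ℝ × (0, ∞) × (0, ∞), and writing z = (μ − g)/σ, its partial derivatives are ∂g/∂μ = 1, ∂g/∂σ = φ(z)/Φ(z), and ∂g/∂c = −1/Φ(z). Consequently, if μ, σ, c are differentiable functions of a parameter x with σ(x) > 0 and c(x) > 0, the Gittins index G(x) = g(μ(x), σ(x), c(x)) satisfies ∇G = ∇μ + (φ(z)·∇σ − ∇c)/Φ(z). -/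

import Mathlib

open MeasureTheory

/-- The standard normal probability density function `φ`. -/
noncomputable def stdGaussianPDF (z : ℝ) : ℝ :=
  (Real.sqrt (2 * Real.pi))⁻¹ * Real.exp (-(z ^ 2) / 2)

/-- The standard normal cumulative distribution function `Φ`. -/
noncomputable def stdGaussianCDF (z : ℝ) : ℝ :=
  ∫ u in Set.Iic z, stdGaussianPDF u

/-!
With `h z = z Φ(z) + φ(z)` (`expectedImprovement`), the defining equation of the Gittins index reads
`h ((μ - g) / σ) = c / σ`. Since `h' = Φ > 0`, `h` is injective with a nonvanishing strict
derivative, so the inverse function theorem makes `z = (μ - g) / σ` a differentiable function of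
`(μ, σ, c)` with `dz = d(c / σ) / Φ(z)`. Differentiating `g = μ - σ z` and using
`c / σ = z Φ(z) + φ(z)` to simplify gives `dg = dμ + (φ(z) dσ - dc) / Φ(z)`.
-/

open Filter Topology

section Calculus

variable {𝕜 : Type*} [NontriviallyNormedField 𝕜]
  {E : Type*} [NormedAddCommGroup E] [NormedSpace 𝕜 E]

theorem HasFDerivAt.fun_div {c s : E → 𝕜} {c' s' : E →L[𝕜] 𝕜} {x : E}
    (hc : HasFDerivAt c c' x) (hs : HasFDerivAt s s' x) (hsx : s x ≠ 0) :
    HasFDerivAt (fun y => c y / s y) ((s x ^ 2)⁻¹ • (s x • c' - c x • s')) x := by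
  simp only [div_eq_mul_inv]
  refine (hc.mul ((hasDerivAt_inv hsx).comp_hasFDerivAt x hs)).congr_fderiv ?_
  ext v
  simp only [add_apply, sub_apply, smul_apply, smul_eq_mul, Function.comp_apply]
  field_simp
  ring

variable [CompleteSpace 𝕜]

theorem HasStrictDerivAt.hasFDerivAt_of_eventually_comp_eq {h : 𝕜 → 𝕜} {h' : 𝕜}
    {z q : E → 𝕜} {q' : E →L[𝕜] 𝕜} {x : E} (hh : HasStrictDerivAt h h' (z x)) (hh' : h' ≠ 0)
    (h_inj : Function.Injective h) (hq : HasFDerivAt q q' x)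
    (hzq : ∀ᶠ y in 𝓝 x, h (z y) = q y) :
    HasFDerivAt z (h'⁻¹ • q') x := by
  set H := hh.localInverse h h' (z x) hh'
  have hqx : h (z x) = q x := hzq.self_of_nhds
  have hH : HasDerivAt H h'⁻¹ (q x) := hqx ▸ (hh.to_localInverse hh').hasDerivAt
  have h_right : ∀ᶠ y in 𝓝 x, h (H (q y)) = q y :=
    hq.continuousAt.eventually (hqx ▸ hh.eventually_right_inverse hh')
  have hHz : (fun y => H (q y)) =ᶠ[𝓝 x] z := by
    filter_upwards [h_right, hzq] with y hy hzy
    exact h_inj (hy.trans hzy.symm)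
  exact (hH.comp_hasFDerivAt x hq).congr_of_eventuallyEq hHz.symm

end Calculus

theorem stdGaussianPDF_pos (z : ℝ) : 0 < stdGaussianPDF z := by
  unfold stdGaussianPDF
  positivity

theorem continuous_stdGaussianPDF : Continuous stdGaussianPDF := by
  unfold stdGaussianPDF
  fun_prop

theorem stdGaussianPDF_eq_gaussianPDFReal :
    stdGaussianPDF = ProbabilityTheory.gaussianPDFReal 0 1 := by
  ext z
  simp [stdGaussianPDF, ProbabilityTheory.gaussianPDFReal]

theorem integrable_stdGaussianPDF : Integrable stdGaussianPDF :=
  stdGaussianPDF_eq_gaussianPDFReal ▸ ProbabilityTheory.integrable_gaussianPDFReal 0 1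

theorem hasStrictDerivAt_stdGaussianPDF (z : ℝ) :
    HasStrictDerivAt stdGaussianPDF (-z * stdGaussianPDF z) z := by
  have hexp : HasStrictDerivAt (fun z : ℝ => -(z ^ 2) / 2) (-z) z := by
    exact ((hasStrictDerivAt_pow 2 z).neg.div_const 2).congr_deriv (by ring)
  exact (hexp.exp.const_mul (Real.sqrt (2 * Real.pi))⁻¹).congr_deriv
    (by unfold stdGaussianPDF; ring)

theorem stdGaussianCDF_pos (z : ℝ) : 0 < stdGaussianCDF z := by
  refine (setIntegral_pos_iff_support_of_nonneg_ae
    (ae_of_all _ fun u => (stdGaussianPDF_pos u).le) integrable_stdGaussianPDF.integrableOn).2 ?_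
  have : Function.support stdGaussianPDF = Set.univ :=
    Function.support_eq_univ fun u => (stdGaussianPDF_pos u).ne'
  simp [this, Real.volume_Iic]

theorem stdGaussianCDF_eq_add_intervalIntegral (z : ℝ) :
    stdGaussianCDF z = stdGaussianCDF 0 + ∫ u in (0 : ℝ)..z, stdGaussianPDF u := by
  rw [← intervalIntegral.integral_Iic_sub_Iic integrable_stdGaussianPDF.integrableOn
    integrable_stdGaussianPDF.integrableOn]
  unfold stdGaussianCDF
  ring

theorem hasStrictDerivAt_stdGaussianCDF (z : ℝ) :
    HasStrictDerivAt stdGaussianCDF (stdGaussianPDF z) z := by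
  rw [funext stdGaussianCDF_eq_add_intervalIntegral]
  exact (continuous_stdGaussianPDF.integral_hasStrictDerivAt 0 z).const_add _

/-- `E[max(Z + z, 0)]` for a standard normal `Z`. -/
noncomputable def expectedImprovement (z : ℝ) : ℝ :=
  z * stdGaussianCDF z + stdGaussianPDF z

theorem hasStrictDerivAt_expectedImprovement (z : ℝ) :
    HasStrictDerivAt expectedImprovement (stdGaussianCDF z) z := by
  exact (((hasStrictDerivAt_id z).mul (hasStrictDerivAt_stdGaussianCDF z)).add
    (hasStrictDerivAt_stdGaussianPDF z)).congr_deriv (by rw [id]; ring)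

theorem strictMono_expectedImprovement : StrictMono expectedImprovement :=
  strictMono_of_deriv_pos fun z => by
    rw [(hasStrictDerivAt_expectedImprovement z).hasDerivAt.deriv]
    exact stdGaussianCDF_pos z

theorem expectedImprovement_div_eq {a σ c : ℝ} (hσ : σ ≠ 0)
    (h : a * stdGaussianCDF (a / σ) + σ * stdGaussianPDF (a / σ) = c) :
    expectedImprovement (a / σ) = c / σ := by
  rw [← h, expectedImprovement]
  field_simp

def IsGaussianGittinsIndex (g : ℝ → ℝ → ℝ → ℝ) : Prop :=
  ∀ m σ c : ℝ, 0 < σ → 0 < c →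
    (m - g m σ c) * stdGaussianCDF ((m - g m σ c) / σ)
      + σ * stdGaussianPDF ((m - g m σ c) / σ) = c

namespace IsGaussianGittinsIndex

variable {g : ℝ → ℝ → ℝ → ℝ} (hg : IsGaussianGittinsIndex g)
include hg

theorem hasFDerivAt_comp {E : Type*} [NormedAddCommGroup E] [NormedSpace ℝ E] {x : E}
    {m s c : E → ℝ} {m' s' c' : E →L[ℝ] ℝ}
    (hm : HasFDerivAt m m' x) (hs : HasFDerivAt s s' x) (hc : HasFDerivAt c c' x)
    (hsx : 0 < s x) (hcx : 0 < c x) :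
    HasFDerivAt (fun y => g (m y) (s y) (c y))
      (m' + (stdGaussianCDF ((m x - g (m x) (s x) (c x)) / s x))⁻¹ •
        (stdGaussianPDF ((m x - g (m x) (s x) (c x)) / s x) • s' - c')) x := by
  set z := fun y => (m y - g (m y) (s y) (c y)) / s y with hz_def
  change HasFDerivAt _ (m' + (stdGaussianCDF (z x))⁻¹ • (stdGaussianPDF (z x) • s' - c')) x
  have hs_pos : ∀ᶠ y in 𝓝 x, 0 < s y := hs.continuousAt.eventually (eventually_gt_nhds hsx)
  have hc_pos : ∀ᶠ y in 𝓝 x, 0 < c y := hc.continuousAt.eventually (eventually_gt_nhds hcx)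
  have hz_eq : ∀ᶠ y in 𝓝 x, expectedImprovement (z y) = c y / s y := by
    filter_upwards [hs_pos, hc_pos] with y hsy hcy
    exact expectedImprovement_div_eq hsy.ne' (hg _ _ _ hsy hcy)
  have hz : HasFDerivAt z ((stdGaussianCDF (z x))⁻¹ • ((s x ^ 2)⁻¹ • (s x • c' - c x • s'))) x :=
    (hasStrictDerivAt_expectedImprovement (z x)).hasFDerivAt_of_eventually_comp_eq
      (stdGaussianCDF_pos (z x)).ne' strictMono_expectedImprovement.injective
      (hc.fun_div hs hsx.ne') hz_eq
  have hg_eq : (fun y => m y - s y * z y) =ᶠ[𝓝 x] fun y => g (m y) (s y) (c y) := by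
    filter_upwards [hs_pos] with y hsy
    simp only [hz_def]
    field_simp
    ring
  refine (hm.sub (hs.mul hz)).congr_of_eventuallyEq hg_eq.symm |>.congr_fderiv ?_
  have hx : s x * (z x * stdGaussianCDF (z x) + stdGaussianPDF (z x)) = c x := by
    rw [← expectedImprovement, hz_eq.self_of_nhds]
    field_simp
  have hΦ : stdGaussianCDF (z x) ≠ 0 := (stdGaussianCDF_pos (z x)).ne'
  clear_value z
  ext v
  simp only [add_apply, sub_apply, smul_apply, smul_eq_mul]
  field_simp
  linear_combination -s' v * hx

theorem hasDerivAt_comp {t : ℝ} {m s c : ℝ → ℝ} {m' s' c' : ℝ}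
    (hm : HasDerivAt m m' t) (hs : HasDerivAt s s' t) (hc : HasDerivAt c c' t)
    (hst : 0 < s t) (hct : 0 < c t) :
    HasDerivAt (fun u => g (m u) (s u) (c u))
      (m' + (stdGaussianPDF ((m t - g (m t) (s t) (c t)) / s t) * s' - c') /
        stdGaussianCDF ((m t - g (m t) (s t) (c t)) / s t)) t := by
  convert (hg.hasFDerivAt_comp hm hs hc hst hct).hasDerivAt using 1
  simp only [add_apply, sub_apply, smul_apply, ContinuousLinearMap.toSpanSingleton_apply_one,
    smul_eq_mul]
  ring

end IsGaussianGittinsIndex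

theorem stmt7 (g : ℝ → ℝ → ℝ → ℝ)
    (hg : ∀ m σ c : ℝ, 0 < σ → 0 < c →
      (m - g m σ c) * stdGaussianCDF ((m - g m σ c) / σ)
        + σ * stdGaussianPDF ((m - g m σ c) / σ) = c) :
    (∀ m σ c : ℝ, 0 < σ → 0 < c →
      DifferentiableAt ℝ (fun p : ℝ × ℝ × ℝ => g p.1 p.2.1 p.2.2) (m, σ, c)) ∧
    (∀ m σ c : ℝ, 0 < σ → 0 < c →
      HasDerivAt (fun m' => g m' σ c) 1 m ∧
      HasDerivAt (fun σ' => g m σ' c)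
        (stdGaussianPDF ((m - g m σ c) / σ) / stdGaussianCDF ((m - g m σ c) / σ)) σ ∧
      HasDerivAt (fun c' => g m σ c')
        (-1 / stdGaussianCDF ((m - g m σ c) / σ)) c) ∧
    (∀ (E : Type*) [inst1 : NormedAddCommGroup E] [inst2 : NormedSpace ℝ E] (x : E)
      (m s c : E → ℝ) (m' s' c' : E →L[ℝ] ℝ),
      HasFDerivAt m m' x → HasFDerivAt s s' x → HasFDerivAt c c' x →
      0 < s x → 0 < c x →
      HasFDerivAt (fun y => g (m y) (s y) (c y))
        (m' + (stdGaussianCDF ((m x - g (m x) (s x) (c x)) / s x))⁻¹ •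
          (stdGaussianPDF ((m x - g (m x) (s x) (c x)) / s x) • s' - c')) x) := by
  have hg : IsGaussianGittinsIndex g := hg
  refine ⟨fun m σ c hσ hc => ?_, fun m σ c hσ hc => ⟨?_, ?_, ?_⟩,
    fun E _ _ x m s c m' s' c' => hg.hasFDerivAt_comp⟩
  · exact (hg.hasFDerivAt_comp hasFDerivAt_fst hasFDerivAt_snd.fst hasFDerivAt_snd.snd
      hσ hc).differentiableAt
  · simpa using hg.hasDerivAt_comp (hasDerivAt_id m) (hasDerivAt_const m σ)
      (hasDerivAt_const m c) hσ hc
  · simpa using hg.hasDerivAt_comp (hasDerivAt_const σ m) (hasDerivAt_id σ)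
      (hasDerivAt_const σ c) hσ hc
  · simpa [neg_div] using hg.hasDerivAt_comp (hasDerivAt_const c m) (hasDerivAt_const c σ)
      (hasDerivAt_id c) hσ hc
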